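/- arXiv:2401.15375 — 14 statements merged into one kernel-verified Lean document; each statement's English description precedes it below -/
import Mathlib

section
/- The set D̂₁⁺ = [k, û₁] × [ŵ₁, v̂] is an absorbing set for the Chialvo map f: for every point (x,y) ∈ ℝ² there exists N₀ ≥ 0 such that for all n ≥ N₀ the n-th iterate fⁿ(x,y) lies in D̂₁⁺. -/
open Real Set Function

/-!
Since `x² e^{-x} ≤ 4/e²` for `x ≥ 0`, the new abscissa `x² e^{y-x} + k` lies in `[k, 4/e² · e^y + k]`.
The new ordinate satisfies `y' - ŷ(x₀) = a (y - ŷ(x₀)) - b (x - x₀)` with `ŷ(x₀) = (c - b x₀)/(1 - a)`,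
so `{x ≥ k, y ≤ Y}` for `Y ≥ v̂` and `D̂₁⁺` itself are forward invariant. While `y > v̂` the orbit
stays in a compact box on which `x - k ≥ δ > 0`, so `y` drops by at least `b δ` per step and
falls below `v̂`. From then on `x ≤ û₁`, and while `y < ŵ₁ < v̂` even `x ≤ û₁ - ε`, so `y` rises by
at least `b ε` per step until it reaches `ŵ₁`; the orbit is then in `D̂₁⁺`.
-/

theorem sq_mul_exp_neg_le {x : ℝ} (hx : 0 ≤ x) : x ^ 2 * exp (-x) ≤ 4 / exp 2 := by
  have h := mul_exp_neg_le_exp_neg_one (x / 2)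
  calc x ^ 2 * exp (-x) = 4 * (x / 2 * exp (-(x / 2))) ^ 2 := by
        rw [mul_pow, ← exp_nat_mul]; ring_nf
    _ ≤ 4 * exp (-1) ^ 2 := by gcongr
    _ = 4 / exp 2 := by rw [← exp_nat_mul, div_eq_mul_inv, ← exp_neg]; norm_num

theorem exists_lt_of_le_sub {s : ℕ → ℝ} {d : ℝ} (hd : 0 < d) (hs : ∀ n, s (n + 1) ≤ s n - d)
    (t : ℝ) : ∃ n, s n < t := by
  have hle : ∀ n : ℕ, s n ≤ s 0 - n * d := by
    intro n
    induction n with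
    | zero => simp
    | succ n ih => push_cast; linarith [hs n]
  obtain ⟨n, hn⟩ := exists_nat_gt ((s 0 - t) / d)
  rw [div_lt_iff₀ hd] at hn
  exact ⟨n, by linarith [hle n]⟩

namespace Chialvo

noncomputable def map (a b c k : ℝ) (p : ℝ × ℝ) : ℝ × ℝ :=
  (p.1 ^ 2 * exp (p.2 - p.1) + k, a * p.2 - b * p.1 + c)

/-- The fixed point of `y ↦ a * y - b * x + c`. -/
noncomputable def nullcline (a b c x : ℝ) : ℝ := (c - b * x) / (1 - a)

noncomputable def xMax (k Y : ℝ) : ℝ := 4 / exp 2 * exp Y + k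

/-- `D̂₁⁺`, where `v̂ = nullcline a b c k`, `û₁ = xMax k v̂` and `ŵ₁ = nullcline a b c û₁`. -/
noncomputable def box (a b c k : ℝ) : Set (ℝ × ℝ) :=
  Icc k (xMax k (nullcline a b c k)) ×ˢ
    Icc (nullcline a b c (xMax k (nullcline a b c k))) (nullcline a b c k)

variable {a b c k : ℝ}

theorem nullcline_strictAnti (ha : a < 1) (hb : 0 < b) : StrictAnti (nullcline a b c) :=
  fun _ _ h ↦ div_lt_div_of_pos_right (by nlinarith) (by linarith)

theorem map_snd_sub_nullcline (ha : a ≠ 1) (x₀ : ℝ) (p : ℝ × ℝ) :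
    (map a b c k p).2 - nullcline a b c x₀ = a * (p.2 - nullcline a b c x₀) - b * (p.1 - x₀) := by
  simp only [map, nullcline]
  field_simp [sub_ne_zero.mpr (Ne.symm ha)]
  ring

theorem le_map_fst (p : ℝ × ℝ) : k ≤ (map a b c k p).1 :=
  le_add_of_nonneg_left (by positivity)

theorem map_fst_le {p : ℝ × ℝ} {Y : ℝ} (hx : 0 ≤ p.1) (hy : p.2 ≤ Y) :
    (map a b c k p).1 ≤ xMax k Y := by
  have h := sq_mul_exp_neg_le hx
  calc (map a b c k p).1 = p.1 ^ 2 * exp (-p.1) * exp p.2 + k := by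
        simp only [map, sub_eq_add_neg, exp_add]; ring
    _ ≤ xMax k Y := by unfold xMax; gcongr

theorem le_map_fst_of_mem {p : ℝ × ℝ} {x₀ M y₀ : ℝ} (hx₀ : 0 ≤ x₀) (hx : p.1 ∈ Icc x₀ M)
    (hy : y₀ ≤ p.2) : x₀ ^ 2 * exp (y₀ - M) + k ≤ (map a b c k p).1 := by
  simp only [map]
  gcongr
  · exact hx.1
  · linarith [hx.2]

theorem map_snd_le_sub (ha : a < 1) (hb : 0 ≤ b) {p : ℝ × ℝ} {x₀ δ : ℝ}
    (hx : x₀ + δ ≤ p.1) (hy : nullcline a b c x₀ ≤ p.2) : (map a b c k p).2 ≤ p.2 - b * δ := by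
  have h := map_snd_sub_nullcline (b := b) (c := c) (k := k) ha.ne x₀ p
  nlinarith

theorem add_le_map_snd (ha : a < 1) (hb : 0 ≤ b) {p : ℝ × ℝ} {x₀ ε : ℝ}
    (hx : p.1 ≤ x₀ - ε) (hy : p.2 ≤ nullcline a b c x₀) : p.2 + b * ε ≤ (map a b c k p).2 := by
  have h := map_snd_sub_nullcline (b := b) (c := c) (k := k) ha.ne x₀ p
  nlinarith

theorem mapsTo_Ici_prod_Iic (ha₀ : 0 ≤ a) (ha₁ : a < 1) (hb : 0 ≤ b) (hk : 0 ≤ k) {Y : ℝ}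
    (hY : nullcline a b c k ≤ Y) :
    MapsTo (map a b c k) (Ici k ×ˢ Iic Y) (Icc k (xMax k Y) ×ˢ Iic Y) := by
  rintro p ⟨hx, hy⟩
  refine ⟨⟨le_map_fst p, map_fst_le (hk.trans hx) hy⟩, ?_⟩
  have h := map_snd_sub_nullcline (b := b) (c := c) (k := k) ha₁.ne k p
  simp only [mem_Ici, mem_Iic] at hx hy ⊢
  nlinarith

theorem mapsTo_box (ha₀ : 0 ≤ a) (ha₁ : a < 1) (hb : 0 ≤ b) (hk : 0 ≤ k) :
    MapsTo (map a b c k) (box a b c k) (box a b c k) := by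
  rintro p ⟨hx, hy⟩
  obtain ⟨hx', hy'⟩ := mapsTo_Ici_prod_Iic ha₀ ha₁ hb hk le_rfl (mk_mem_prod hx.1 hy.2)
  refine ⟨hx', ?_, hy'⟩
  have h := map_snd_sub_nullcline (b := b) (c := c) (k := k) ha₁.ne (xMax k (nullcline a b c k)) p
  nlinarith [hx.2, hy.1]

theorem exists_iterate_mem_Ici_prod_Iic (ha₀ : 0 ≤ a) (ha₁ : a < 1) (hb : 0 < b) (hk : 0 < k)
    (p : ℝ × ℝ) : ∃ n, (map a b c k)^[n] p ∈ Ici k ×ˢ Iic (nullcline a b c k) := by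
  set v := nullcline a b c k
  set Y := max (map a b c k p).2 v
  set M := xMax k Y
  have hS := mapsTo_Ici_prod_Iic ha₀ ha₁ hb.le hk.le (le_max_right (map a b c k p).2 v)
  have hq : ∀ n, (map a b c k)^[n + 2] p ∈ Icc k M ×ˢ Iic Y := fun n ↦ by
    rw [iterate_add_apply]
    exact (hS.mono_left (prod_mono Icc_subset_Ici_self le_rfl)).iterate n
      (@hS (map a b c k p) ⟨le_map_fst p, le_max_left _ v⟩)
  by_contra! hout
  have hv : ∀ n, v < ((map a b c k)^[n + 2] p).2 := fun n ↦ by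
    by_contra! h
    exact hout (n + 2) (mk_mem_prod (hq n).1.1 h)
  set δ := k ^ 2 * exp (v - M)
  have hpush : ∀ n, k + δ ≤ ((map a b c k)^[n + 3] p).1 := fun n ↦ by
    rw [iterate_succ_apply']
    linarith [le_map_fst_of_mem (a := a) (b := b) (c := c) (k := k) hk.le (hq n).1 (hv n).le]
  obtain ⟨n, hn⟩ := exists_lt_of_le_sub (s := fun n ↦ ((map a b c k)^[n + 3] p).2)
    (mul_pos hb (by positivity : 0 < δ)) (fun n ↦ by
      rw [iterate_succ_apply' _ (n + 3)]
      exact map_snd_le_sub ha₁ hb.le (hpush n) (hv (n + 1)).le) v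
  exact (hv (n + 1)).not_gt hn

theorem exists_iterate_mem_box (ha₀ : 0 ≤ a) (ha₁ : a < 1) (hb : 0 < b) (hk : 0 ≤ k)
    {p : ℝ × ℝ} (hp : p ∈ Ici k ×ˢ Iic (nullcline a b c k)) :
    ∃ n, (map a b c k)^[n] p ∈ box a b c k := by
  set v := nullcline a b c k
  set u := xMax k v
  set w := nullcline a b c u
  have hH := mapsTo_Ici_prod_Iic ha₀ ha₁ hb.le hk (le_refl v)
  have hq : ∀ n, (map a b c k)^[n + 1] p ∈ Icc k u ×ˢ Iic v := fun n ↦ by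
    rw [iterate_succ_apply']
    exact hH ((hH.mono_right (prod_mono Icc_subset_Ici_self le_rfl)).iterate n hp)
  by_contra! hout
  have hw : ∀ n, ((map a b c k)^[n + 1] p).2 < w := fun n ↦ by
    by_contra! h
    exact hout (n + 1) ⟨(hq n).1, h, (hq n).2⟩
  have hwv : w < v := nullcline_strictAnti ha₁ hb (lt_add_of_pos_left k (by positivity))
  set ε := u - xMax k w
  have hε : 0 < ε := sub_pos.2 (by unfold u xMax; gcongr)
  have hpush : ∀ n, ((map a b c k)^[n + 2] p).1 ≤ u - ε := fun n ↦ by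
    rw [iterate_succ_apply', sub_sub_cancel]
    exact map_fst_le (hk.trans (hq n).1.1) (hw n).le
  obtain ⟨n, hn⟩ := exists_lt_of_le_sub (s := fun n ↦ -((map a b c k)^[n + 2] p).2)
    (mul_pos hb hε) (fun n ↦ by
      have := add_le_map_snd (c := c) (k := k) ha₁ hb.le (hpush n) (hw (n + 1)).le
      rw [iterate_succ_apply' _ (n + 2)]
      linarith) (-w)
  linarith [hw (n + 1)]

end Chialvo

theorem chialvo_D1plus_absorbing_general
    (a b c k : ℝ)
    (ha : a ∈ Set.Ioo (0:ℝ) 1) (hb : b ∈ Set.Ioo (0:ℝ) 1)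
    (hk : 0 < k)
    (f : ℝ × ℝ → ℝ × ℝ)
    (hf : ∀ p : ℝ × ℝ,
      f p = (p.1 ^ 2 * Real.exp (p.2 - p.1) + k, a * p.2 - b * p.1 + c))
    (v u1 w1 : ℝ)
    (hv : v = (c - b * k) / (1 - a))
    (hu1 : u1 = 4 / Real.exp 2 * Real.exp v + k)
    (hw1 : w1 = (c - b * u1) / (1 - a)) :
    ∀ p : ℝ × ℝ, ∃ N₀ : ℕ, ∀ n ≥ N₀,
      f^[n] p ∈ Set.Icc k u1 ×ˢ Set.Icc w1 v := by
  obtain rfl : f = Chialvo.map a b c k := funext hf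
  subst hw1 hu1 hv
  intro p
  obtain ⟨n₁, h₁⟩ := Chialvo.exists_iterate_mem_Ici_prod_Iic ha.1.le ha.2 hb.1 hk p
  obtain ⟨n₂, h₂⟩ := Chialvo.exists_iterate_mem_box ha.1.le ha.2 hb.1 hk.le h₁
  refine ⟨n₂ + n₁, fun n hn ↦ ?_⟩
  obtain ⟨m, rfl⟩ := Nat.exists_eq_add_of_le hn
  rw [Nat.add_comm (n₂ + n₁) m, iterate_add_apply, iterate_add_apply]
  exact (Chialvo.mapsTo_box ha.1.le ha.2 hb.1.le hk.le).iterate m h₂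

/-- The set `D̂₁⁺ = [k, û₁] × [ŵ₁, v̂]` is an absorbing set for the Chialvo map:
every forward trajectory eventually enters it and stays there forever. -/
theorem chialvo_D1plus_absorbing
    (a b c k : ℝ)
    (ha : a ∈ Set.Ioo (0:ℝ) 1) (hb : b ∈ Set.Ioo (0:ℝ) 1)
    (hc : c ∈ Set.Ioo (0:ℝ) 1) (hk : 0 < k)
    (f : ℝ × ℝ → ℝ × ℝ)
    (hf : ∀ p : ℝ × ℝ,
      f p = (p.1 ^ 2 * Real.exp (p.2 - p.1) + k, a * p.2 - b * p.1 + c))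
    (v u1 w1 : ℝ)
    (hv : v = (c - b * k) / (1 - a))
    (hu1 : u1 = 4 / Real.exp 2 * Real.exp v + k)
    (hw1 : w1 = (c - b * u1) / (1 - a)) :
    ∀ p : ℝ × ℝ, ∃ N₀ : ℕ, ∀ n ≥ N₀,
      f^[n] p ∈ Set.Icc k u1 ×ˢ Set.Icc w1 v :=
  chialvo_D1plus_absorbing_general a b c k ha hb hk f hf v u1 w1 hv hu1 hw1
end

section
/- If (x,y) lies in the region B̂ = {(x,y) : x ≥ k, y > v̂}, then the second coordinate strictly decreases under the Chialvo map: ȳ < y, where (x̄, ȳ) = f(x,y). -/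
/-- In region `B̂ = {x ≥ k, y > v̂}` the second coordinate strictly decreases
under the Chialvo map. -/
theorem chialvo_regionB_decrease
    (a b c k : ℝ)
    (ha : a ∈ Set.Ioo (0:ℝ) 1) (hb : b ∈ Set.Ioo (0:ℝ) 1)
    (hc : c ∈ Set.Ioo (0:ℝ) 1) (hk : 0 < k)
    (f : ℝ × ℝ → ℝ × ℝ)
    (hf : ∀ p : ℝ × ℝ,
      f p = (p.1 ^ 2 * Real.exp (p.2 - p.1) + k, a * p.2 - b * p.1 + c))
    (v : ℝ) (hv : v = (c - b * k) / (1 - a)) :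
    ∀ p : ℝ × ℝ, p.1 ≥ k → p.2 > v → (f p).2 < p.2 := by
  intro p hx hy
  rw [hf]
  obtain ⟨ha0, ha1⟩ := ha
  obtain ⟨hb0, hb1⟩ := hb
  have h1a : (0:ℝ) < 1 - a := by linarith
  have hv' : v * (1 - a) = c - b * k := by
    rw [hv]; field_simp
  simp only
  nlinarith [mul_lt_mul_of_pos_right hy h1a, mul_le_mul_of_nonneg_left hx hb0.le]
end

section
/- There exists a positive number s > 0 such that for every (x,y) in the region B̂ = {(x,y) : x ≥ k, y > v̂}, at least one of the following three conditions holds: y − ȳ ≥ s, or f(x,y) ∉ B̂, or ȳ − ȳ̄ ≥ s, where (x̄, ȳ) := f(x,y) and (x̄̄, ȳ̄) := f(x̄, ȳ). -/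
/-!
With `v̂ (1 - a) = c - b k`, the drop of the second coordinate is
`y - ȳ = (1 - a)(y - v̂) + b (x - k) ≥ b (x - k)` on `B̂`. Far from the wall (`x ≥ k + 1`) this
is at least `b`. Near it, if `f(x, y)` stays in `B̂`, then `x̄ - k = x² e^{y - x}` is at least
`k² e^{v̂ - k - 1}`, so the next drop `ȳ - ȳ̄` is at least `b k² e^{v̂ - k - 1}`.
-/

open Real

section

variable {a b c k v x y : ℝ}

lemma mul_sub_le_sub_chialvo_snd (ha : a < 1) (hv : v = (c - b * k) / (1 - a)) (hy : v ≤ y) :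
    b * (x - k) ≤ y - (a * y - b * x + c) := by
  have hva : (1 - a) * v = c - b * k := by
    rw [hv]; field_simp [(sub_pos.2 ha).ne']
  nlinarith [mul_nonneg (sub_pos.2 ha).le (sub_nonneg.2 hy)]

lemma sq_mul_exp_le_sq_mul_exp (hk : 0 ≤ k) (hx : k ≤ x) (hxk : x < k + 1) (hy : v ≤ y) :
    k ^ 2 * exp (v - k - 1) ≤ x ^ 2 * exp (y - x) := by
  have hexp : v - k - 1 ≤ y - x := by linarith
  gcongr

end

theorem chialvo_regionB_speed_general
    (a b c k : ℝ)
    (ha : a ∈ Set.Ioo (0:ℝ) 1) (hb : b ∈ Set.Ioo (0:ℝ) 1)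
    (hk : 0 < k)
    (f : ℝ × ℝ → ℝ × ℝ)
    (hf : ∀ p : ℝ × ℝ,
      f p = (p.1 ^ 2 * Real.exp (p.2 - p.1) + k, a * p.2 - b * p.1 + c))
    (v : ℝ) (hv : v = (c - b * k) / (1 - a))
    (B : Set (ℝ × ℝ)) (hB : B = {p : ℝ × ℝ | p.1 ≥ k ∧ p.2 > v}) :
    ∃ s : ℝ, s > 0 ∧ ∀ p ∈ B,
      p.2 - (f p).2 ≥ s ∨ f p ∉ B ∨ (f p).2 - (f (f p)).2 ≥ s := by
  have hb0 := hb.1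
  refine ⟨min b (b * (k ^ 2 * exp (v - k - 1))), lt_min hb0 (by positivity), ?_⟩
  have drop : ∀ q : ℝ × ℝ, v ≤ q.2 → b * (q.1 - k) ≤ q.2 - (f q).2 := fun q hq => by
    rw [hf q]
    exact mul_sub_le_sub_chialvo_snd ha.2 hv hq
  intro p hp
  obtain ⟨hx, hy⟩ : p.1 ≥ k ∧ p.2 > v := by rwa [hB] at hp
  rcases le_or_gt (k + 1) p.1 with hfar | hnear
  · left
    calc p.2 - (f p).2 ≥ b * (p.1 - k) := drop p hy.le
      _ ≥ b * 1 := by gcongr; linarith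
      _ ≥ _ := by rw [mul_one]; exact min_le_left _ _
  · by_cases hfp : f p ∈ B
    · right; right
      obtain ⟨-, hfy⟩ : (f p).1 ≥ k ∧ (f p).2 > v := by rwa [hB] at hfp
      have hfst : (f p).1 - k = p.1 ^ 2 * exp (p.2 - p.1) := by rw [hf p]; ring
      have hexc := sq_mul_exp_le_sq_mul_exp hk.le hx hnear hy.le
      calc (f p).2 - (f (f p)).2 ≥ b * ((f p).1 - k) := drop (f p) hfy.le
        _ ≥ b * (k ^ 2 * exp (v - k - 1)) := by rw [hfst]; gcongr
        _ ≥ _ := min_le_right _ _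
    · exact Or.inr (Or.inl hfp)

/-- Moving downward in region `B̂`: there is a uniform positive speed `s` such that
for every point of `B̂`, either `y - ȳ ≥ s`, or the image leaves `B̂`,
or `ȳ - ȳ̄ ≥ s`. -/
theorem chialvo_regionB_speed
    (a b c k : ℝ)
    (ha : a ∈ Set.Ioo (0:ℝ) 1) (hb : b ∈ Set.Ioo (0:ℝ) 1)
    (hc : c ∈ Set.Ioo (0:ℝ) 1) (hk : 0 < k)
    (f : ℝ × ℝ → ℝ × ℝ)
    (hf : ∀ p : ℝ × ℝ,
      f p = (p.1 ^ 2 * Real.exp (p.2 - p.1) + k, a * p.2 - b * p.1 + c))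
    (v : ℝ) (hv : v = (c - b * k) / (1 - a))
    (B : Set (ℝ × ℝ)) (hB : B = {p : ℝ × ℝ | p.1 ≥ k ∧ p.2 > v}) :
    ∃ s : ℝ, s > 0 ∧ ∀ p ∈ B,
      p.2 - (f p).2 ≥ s ∨ f p ∉ B ∨ (f p).2 - (f (f p)).2 ≥ s :=
  chialvo_regionB_speed_general a b c k ha hb hk f hf v hv B hB
end

section
/- If (x,y) ∉ Â ∪ B̂ (that is, x ≥ k and y ≤ v̂), then f(x,y) ∉ B̂; in other words, once a trajectory has left region B̂ it cannot return to B̂. -/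
/-! `v̂ = (c - b k) / (1 - a)` is the fixed point of the affine map `y ↦ a y - b k + c`, and for
`a, b ≥ 0` the second coordinate `a y - b x + c` of the Chialvo map is monotone in `y` and antitone
in `x`. Hence `x ≥ k` and `y ≤ v̂` give `a y - b x + c ≤ a v̂ - b k + c = v̂`, so `f(x,y) ∉ B̂`. -/

lemma affine_apply_div_one_sub_self {a b c k : ℝ} (ha : a ≠ 1) :
    a * ((c - b * k) / (1 - a)) - b * k + c = (c - b * k) / (1 - a) := by
  have h : 1 - a ≠ 0 := sub_ne_zero.mpr ha.symm
  field_simp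
  ring

lemma affine_le_div_one_sub_of_le {a b c k x y : ℝ} (ha₀ : 0 ≤ a) (ha₁ : a ≠ 1) (hb : 0 ≤ b)
    (hx : k ≤ x) (hy : y ≤ (c - b * k) / (1 - a)) :
    a * y - b * x + c ≤ (c - b * k) / (1 - a) :=
  calc a * y - b * x + c ≤ a * ((c - b * k) / (1 - a)) - b * k + c := by gcongr
    _ = (c - b * k) / (1 - a) := affine_apply_div_one_sub_self ha₁

theorem chialvo_no_return_B_general
    (a b c k : ℝ)
    (ha : a ∈ Set.Ioo (0:ℝ) 1) (hb : b ∈ Set.Ioo (0:ℝ) 1)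
    (f : ℝ × ℝ → ℝ × ℝ)
    (hf : ∀ p : ℝ × ℝ,
      f p = (p.1 ^ 2 * Real.exp (p.2 - p.1) + k, a * p.2 - b * p.1 + c))
    (v : ℝ) (hv : v = (c - b * k) / (1 - a))
    (A B : Set (ℝ × ℝ))
    (hA : A = {p : ℝ × ℝ | p.1 < k})
    (hB : B = {p : ℝ × ℝ | p.1 ≥ k ∧ p.2 > v}) :
    ∀ p : ℝ × ℝ, p ∉ A ∪ B → f p ∉ B := by
  rintro ⟨x, y⟩ hp
  subst hA hB hv
  simp only [Set.mem_union, Set.mem_ofPred_eq, not_or, not_lt, not_and] at hp ⊢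
  obtain ⟨hx, hy⟩ := hp
  rw [hf]
  intro _
  exact affine_le_div_one_sub_of_le ha.1.le ha.2.ne hb.1.le hx (hy hx)

/-- No return to region `B̂`: if `(x,y) ∉ Â ∪ B̂` (i.e. `x ≥ k` and `y ≤ v̂`),
then `f(x,y) ∉ B̂`. -/
theorem chialvo_no_return_B
    (a b c k : ℝ)
    (ha : a ∈ Set.Ioo (0:ℝ) 1) (hb : b ∈ Set.Ioo (0:ℝ) 1)
    (hc : c ∈ Set.Ioo (0:ℝ) 1) (hk : 0 < k)
    (f : ℝ × ℝ → ℝ × ℝ)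
    (hf : ∀ p : ℝ × ℝ,
      f p = (p.1 ^ 2 * Real.exp (p.2 - p.1) + k, a * p.2 - b * p.1 + c))
    (v : ℝ) (hv : v = (c - b * k) / (1 - a))
    (A B : Set (ℝ × ℝ))
    (hA : A = {p : ℝ × ℝ | p.1 < k})
    (hB : B = {p : ℝ × ℝ | p.1 ≥ k ∧ p.2 > v}) :
    ∀ p : ℝ × ℝ, p ∉ A ∪ B → f p ∉ B :=
  chialvo_no_return_B_general a b c k ha hb f hf v hv A B hA hB
end

section
/- Every trajectory of the Chialvo map starting in the region B̂ = {(x,y) : x ≥ k, y > v̂} leaves B̂ after a finite number of iterations: for every (x,y) ∈ B̂ there exists n ≥ 1 such that fⁿ(x,y) ∉ B̂. -/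
/-! If an orbit stayed in `B̂` forever, then `u = x - k ≥ 0` and `w = y - v̂ > 0` along it, and
since `(k, v̂)` solves the second coordinate of the fixed point equation, `w' = a w - b u`.
This forces `w → 0` geometrically and then `b u = a w - w' → 0`, so the orbit converges to
`(k, v̂)`. By continuity `(k, v̂)` would be a fixed point of `f`, but the first coordinate of
`f (k, v̂)` is `k² exp (v̂ - k) + k > k`. -/

open Filter Topology

theorem tendsto_zero_of_nonneg_of_le_mul {w : ℕ → ℝ} {a : ℝ} (ha0 : 0 ≤ a) (ha1 : a < 1)
    (hw : ∀ n, 0 ≤ w n) (hstep : ∀ n, w (n + 1) ≤ a * w n) : Tendsto w atTop (𝓝 0) := by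
  have hgeom : Tendsto (fun n => a ^ n * w 0) atTop (𝓝 0) := by
    simpa using (tendsto_pow_atTop_nhds_zero_of_lt_one ha0 ha1).mul_const (w 0)
  exact squeeze_zero hw (fun n => le_geom ha0 n fun m _ => hstep m) hgeom

theorem tendsto_zero_of_pos_of_eq_mul_sub {u w : ℕ → ℝ} {a b : ℝ} (ha0 : 0 ≤ a) (ha1 : a < 1)
    (hb : 0 < b) (hu : ∀ n, 0 ≤ u n) (hw : ∀ n, 0 < w n)
    (hstep : ∀ n, w (n + 1) = a * w n - b * u n) :
    Tendsto w atTop (𝓝 0) ∧ Tendsto u atTop (𝓝 0) := by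
  have hw_lim : Tendsto w atTop (𝓝 0) :=
    tendsto_zero_of_nonneg_of_le_mul ha0 ha1 (fun n => (hw n).le) fun n => by
      nlinarith [hstep n, hu n]
  have hu_eq : u = fun n => (a * w n - w (n + 1)) / b := by
    funext n
    field_simp
    linarith [hstep n]
  refine ⟨hw_lim, ?_⟩
  rw [hu_eq]
  simpa using ((hw_lim.const_mul a).sub (hw_lim.comp (tendsto_add_atTop_nat 1))).div_const b

theorem chialvo_escape_B_general
    (a b c k : ℝ)
    (ha : a ∈ Set.Ioo (0:ℝ) 1) (hb : b ∈ Set.Ioo (0:ℝ) 1)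
    (hk : 0 < k)
    (f : ℝ × ℝ → ℝ × ℝ)
    (hf : ∀ p : ℝ × ℝ,
      f p = (p.1 ^ 2 * Real.exp (p.2 - p.1) + k, a * p.2 - b * p.1 + c))
    (v : ℝ) (hv : v = (c - b * k) / (1 - a))
    (B : Set (ℝ × ℝ)) (hB : B = {p : ℝ × ℝ | p.1 ≥ k ∧ p.2 > v}) :
    ∀ p ∈ B, ∃ n : ℕ, n ≥ 1 ∧ f^[n] p ∉ B := by
  subst hB
  intro p hp
  by_contra! hstay
  have hmem : ∀ n, k ≤ (f^[n] p).1 ∧ v < (f^[n] p).2 := fun n => by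
    rcases n.eq_zero_or_pos with rfl | hn
    · exact hp
    · exact hstay n hn
  have hv_fix : a * v - b * k + c = v := by
    rw [hv]
    field_simp [(sub_pos.2 ha.2).ne']
    ring
  have hstep : ∀ n, (f^[n + 1] p).2 - v = a * ((f^[n] p).2 - v) - b * ((f^[n] p).1 - k) :=
    fun n => by
      rw [Function.iterate_succ_apply', hf]
      linarith
  obtain ⟨hy, hx⟩ := tendsto_zero_of_pos_of_eq_mul_sub ha.1.le ha.2 hb.1
    (fun n => sub_nonneg.2 (hmem n).1) (fun n => sub_pos.2 (hmem n).2) hstep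
  have horbit : Tendsto (fun n => f^[n] p) atTop (𝓝 (k, v)) := by
    simpa using (hx.add_const k).prodMk_nhds (hy.add_const v)
  have hcont : Continuous f := by
    rw [funext hf]
    fun_prop
  have hfix := congrArg Prod.fst (isFixedPt_of_tendsto_iterate horbit hcont.continuousAt).eq
  rw [hf] at hfix
  have : 0 < k ^ 2 * Real.exp (v - k) := by positivity
  simp only at hfix
  linarith

/-- Every trajectory starting in region `B̂ = {x ≥ k, y > v̂}` leaves `B̂`
after a finite number of iterations. -/
theorem chialvo_escape_B
    (a b c k : ℝ)
    (ha : a ∈ Set.Ioo (0:ℝ) 1) (hb : b ∈ Set.Ioo (0:ℝ) 1)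
    (hc : c ∈ Set.Ioo (0:ℝ) 1) (hk : 0 < k)
    (f : ℝ × ℝ → ℝ × ℝ)
    (hf : ∀ p : ℝ × ℝ,
      f p = (p.1 ^ 2 * Real.exp (p.2 - p.1) + k, a * p.2 - b * p.1 + c))
    (v : ℝ) (hv : v = (c - b * k) / (1 - a))
    (B : Set (ℝ × ℝ)) (hB : B = {p : ℝ × ℝ | p.1 ≥ k ∧ p.2 > v}) :
    ∀ p ∈ B, ∃ n : ℕ, n ≥ 1 ∧ f^[n] p ∉ B :=
  chialvo_escape_B_general a b c k ha hb hk f hf v hv B hB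
end

section
/- If (x,y) lies in Ĉ₁ ∪ D̂₁ (that is, x ≥ k and y ≤ v̂), then f(x,y) lies in D̂₁ = {(x,y) : k ≤ x ≤ û₁, y ≤ v̂}; in particular D̂₁ is positively invariant under the Chialvo map. -/
/-- If `(x,y) ∈ Ĉ₁ ∪ D̂₁` (i.e. `x ≥ k` and `y ≤ v̂`) then
`f(x,y) ∈ D̂₁ = {k ≤ x ≤ û₁, y ≤ v̂}`. -/
theorem chialvo_C1_D1_invariance
    (a b c k : ℝ)
    (ha : a ∈ Set.Ioo (0:ℝ) 1) (hb : b ∈ Set.Ioo (0:ℝ) 1)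
    (hc : c ∈ Set.Ioo (0:ℝ) 1) (hk : 0 < k)
    (f : ℝ × ℝ → ℝ × ℝ)
    (hf : ∀ p : ℝ × ℝ,
      f p = (p.1 ^ 2 * Real.exp (p.2 - p.1) + k, a * p.2 - b * p.1 + c))
    (v u1 : ℝ)
    (hv : v = (c - b * k) / (1 - a))
    (hu1 : u1 = 4 / Real.exp 2 * Real.exp v + k)
    (C1 D1 : Set (ℝ × ℝ))
    (hC1 : C1 = {p : ℝ × ℝ | p.1 > u1 ∧ p.2 ≤ v})
    (hD1 : D1 = {p : ℝ × ℝ | k ≤ p.1 ∧ p.1 ≤ u1 ∧ p.2 ≤ v}) :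
    ∀ p ∈ C1 ∪ D1, f p ∈ D1 := by
  intro p hp
  obtain ⟨hx, hy⟩ : k ≤ p.1 ∧ p.2 ≤ v := by
    have hku : k ≤ u1 := by
      rw [hu1]
      have : 0 < 4 / Real.exp 2 * Real.exp v := by positivity
      linarith
    rcases hp with h | h
    · rw [hC1] at h; exact ⟨hku.trans h.1.le, h.2⟩
    · rw [hD1] at h; exact ⟨h.1, h.2.2⟩
  set x := p.1; set y := p.2
  have hx0 : 0 < x := hk.trans_le hx
  rw [hf, hD1]
  simp only [Set.mem_setOf_eq]
  refine ⟨by nlinarith [Real.exp_pos (y - x), sq_nonneg x], ?_, ?_⟩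
  · have h1 : x / 2 ≤ Real.exp (x / 2 - 1) := by
      have := Real.add_one_le_exp (x / 2 - 1); linarith
    have h2 : x ^ 2 ≤ 4 * Real.exp (x - 2) := by
      have h0 := Real.exp_nonneg (x / 2 - 1)
      have hsq : Real.exp (x / 2 - 1) * Real.exp (x / 2 - 1) = Real.exp (x - 2) := by
        rw [← Real.exp_add]; ring_nf
      nlinarith
    have h3 : Real.exp (y - x) ≤ Real.exp (v - x) := Real.exp_le_exp.mpr (by linarith)
    have h4 : x ^ 2 * Real.exp (y - x) ≤ 4 * Real.exp (x - 2) * Real.exp (v - x) := by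
      nlinarith [Real.exp_pos (y - x), Real.exp_pos (v - x)]
    have h5 : Real.exp (x - 2) * Real.exp (v - x) = Real.exp v / Real.exp 2 := by
      rw [← Real.exp_add, show x - 2 + (v - x) = v - 2 by ring, Real.exp_sub]
    rw [hu1]
    calc x ^ 2 * Real.exp (y - x) + k ≤ 4 * (Real.exp v / Real.exp 2) + k := by nlinarith
      _ = 4 / Real.exp 2 * Real.exp v + k := by ring
  · have hv' : c - b * k = v * (1 - a) := by
      have h1a : (1:ℝ) - a ≠ 0 := by have := ha.2; intro h; linarith
      rw [hv, div_mul_cancel₀ _ h1a]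
    have e1 : a * y ≤ a * v := mul_le_mul_of_nonneg_left hy ha.1.le
    have e2 : b * k ≤ b * x := mul_le_mul_of_nonneg_left hx hb.1.le
    linarith
end

section
/- If (x,y) lies in the region Ê₁ = {(x,y) : k ≤ x ≤ û₁, y < ŵ₁}, then the second coordinate strictly increases under the Chialvo map: ȳ > y, where (x̄, ȳ) = f(x,y). -/
/-!
The second coordinate evolves by the affine map `y ↦ a y + (c - b x)`, which increases `y` exactly
below its fixed point `(c - b x) / (1 - a)`. Since `b ≥ 0`, this fixed point is antitone in `x`,
so for `x ≤ û₁` it lies above `ŵ₁`.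
-/

lemma lt_mul_add_of_lt_div_one_sub {a d y : ℝ} (ha : a < 1) (hy : y < d / (1 - a)) :
    y < a * y + d := by
  have := (lt_div_iff₀ (sub_pos.2 ha)).1 hy
  linarith

theorem chialvo_regionE1_increase_general
    (a b c k : ℝ)
    (ha : a ∈ Set.Ioo (0:ℝ) 1) (hb : b ∈ Set.Ioo (0:ℝ) 1)
    (f : ℝ × ℝ → ℝ × ℝ)
    (hf : ∀ p : ℝ × ℝ,
      f p = (p.1 ^ 2 * Real.exp (p.2 - p.1) + k, a * p.2 - b * p.1 + c))
    (u1 w1 : ℝ)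
    (hw1 : w1 = (c - b * u1) / (1 - a)) :
    ∀ p : ℝ × ℝ, k ≤ p.1 → p.1 ≤ u1 → p.2 < w1 → (f p).2 > p.2 := by
  intro p _ hx hy
  have hy' : p.2 < a * p.2 + (c - b * u1) := lt_mul_add_of_lt_div_one_sub ha.2 (hw1 ▸ hy)
  have hbx : b * p.1 ≤ b * u1 := mul_le_mul_of_nonneg_left hx hb.1.le
  rw [hf]
  show p.2 < a * p.2 - b * p.1 + c
  linarith

/-- In region `Ê₁ = {k ≤ x ≤ û₁, y < ŵ₁}` the second coordinate strictly increases
under the Chialvo map. -/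
theorem chialvo_regionE1_increase
    (a b c k : ℝ)
    (ha : a ∈ Set.Ioo (0:ℝ) 1) (hb : b ∈ Set.Ioo (0:ℝ) 1)
    (hc : c ∈ Set.Ioo (0:ℝ) 1) (hk : 0 < k)
    (f : ℝ × ℝ → ℝ × ℝ)
    (hf : ∀ p : ℝ × ℝ,
      f p = (p.1 ^ 2 * Real.exp (p.2 - p.1) + k, a * p.2 - b * p.1 + c))
    (v u1 w1 : ℝ)
    (hv : v = (c - b * k) / (1 - a))
    (hu1 : u1 = 4 / Real.exp 2 * Real.exp v + k)
    (hw1 : w1 = (c - b * u1) / (1 - a)) :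
    ∀ p : ℝ × ℝ, k ≤ p.1 → p.1 ≤ u1 → p.2 < w1 → (f p).2 > p.2 :=
  chialvo_regionE1_increase_general a b c k ha hb f hf u1 w1 hw1
end

section
/- If (x,y) ∈ D̂₁ \ Ê₁ (that is, k ≤ x ≤ û₁ and ŵ₁ ≤ y ≤ v̂), then f(x,y) ∉ Ê₁; in other words, once a trajectory has left region Ê₁ while staying in D̂₁ it cannot return to Ê₁ in one step. -/
/-!
`ŵ₁` is the fixed point of the second coordinate `y ↦ a y - b û₁ + c` of the map on the line
`x = û₁`. Since that coordinate is nondecreasing in `y` and nonincreasing in `x`, every point with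
`x ≤ û₁` and `y ≥ ŵ₁` is sent to a point whose second coordinate is again `≥ ŵ₁`.
-/

lemma affine_div_one_sub_fixed {a b c u : ℝ} (ha : a ≠ 1) :
    a * ((c - b * u) / (1 - a)) - b * u + c = (c - b * u) / (1 - a) := by
  have : 1 - a ≠ 0 := sub_ne_zero.mpr (Ne.symm ha)
  field_simp
  ring

lemma div_one_sub_le_affine {a b c u x y : ℝ} (ha₀ : 0 ≤ a) (ha₁ : a ≠ 1) (hb : 0 ≤ b)
    (hx : x ≤ u) (hy : (c - b * u) / (1 - a) ≤ y) :
    (c - b * u) / (1 - a) ≤ a * y - b * x + c :=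
  calc (c - b * u) / (1 - a) = a * ((c - b * u) / (1 - a)) - b * u + c :=
        (affine_div_one_sub_fixed ha₁).symm
    _ ≤ a * y - b * x + c := by gcongr

theorem chialvo_no_return_E1_general
    (a b c k : ℝ)
    (ha : a ∈ Set.Ioo (0:ℝ) 1) (hb : b ∈ Set.Ioo (0:ℝ) 1)
    (f : ℝ × ℝ → ℝ × ℝ)
    (hf : ∀ p : ℝ × ℝ,
      f p = (p.1 ^ 2 * Real.exp (p.2 - p.1) + k, a * p.2 - b * p.1 + c))
    (v u1 w1 : ℝ)
    (hw1 : w1 = (c - b * u1) / (1 - a))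
    (D1 E1 : Set (ℝ × ℝ))
    (hD1 : D1 = {p : ℝ × ℝ | k ≤ p.1 ∧ p.1 ≤ u1 ∧ p.2 ≤ v})
    (hE1 : E1 = {p : ℝ × ℝ | k ≤ p.1 ∧ p.1 ≤ u1 ∧ p.2 < w1}) :
    ∀ p ∈ D1 \ E1, f p ∉ E1 := by
  subst hD1 hE1 hw1
  rintro ⟨x, y⟩ ⟨⟨hkx, hxu, -⟩, hpE⟩ hfE
  have hwy : (c - b * u1) / (1 - a) ≤ y := not_lt.mp fun hy => hpE ⟨hkx, hxu, hy⟩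
  rw [hf] at hfE
  exact hfE.2.2.not_ge (div_one_sub_le_affine ha.1.le ha.2.ne hb.1.le hxu hwy)

/-- No return to region `Ê₁`: if `(x,y) ∈ D̂₁ \ Ê₁` then `f(x,y) ∉ Ê₁`. -/
theorem chialvo_no_return_E1
    (a b c k : ℝ)
    (ha : a ∈ Set.Ioo (0:ℝ) 1) (hb : b ∈ Set.Ioo (0:ℝ) 1)
    (hc : c ∈ Set.Ioo (0:ℝ) 1) (hk : 0 < k)
    (f : ℝ × ℝ → ℝ × ℝ)
    (hf : ∀ p : ℝ × ℝ,
      f p = (p.1 ^ 2 * Real.exp (p.2 - p.1) + k, a * p.2 - b * p.1 + c))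
    (v u1 w1 : ℝ)
    (hv : v = (c - b * k) / (1 - a))
    (hu1 : u1 = 4 / Real.exp 2 * Real.exp v + k)
    (hw1 : w1 = (c - b * u1) / (1 - a))
    (D1 E1 : Set (ℝ × ℝ))
    (hD1 : D1 = {p : ℝ × ℝ | k ≤ p.1 ∧ p.1 ≤ u1 ∧ p.2 ≤ v})
    (hE1 : E1 = {p : ℝ × ℝ | k ≤ p.1 ∧ p.1 ≤ u1 ∧ p.2 < w1}) :
    ∀ p ∈ D1 \ E1, f p ∉ E1 :=
  chialvo_no_return_E1_general a b c k ha hb f hf v u1 w1 hw1 D1 E1 hD1 hE1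
end

section
/- Every trajectory of the Chialvo map starting in the region Ê₁ = {(x,y) : k ≤ x ≤ û₁, y < ŵ₁} leaves Ê₁ after a finite number of iterations: for every (x,y) ∈ Ê₁ there exists n ≥ 1 such that fⁿ(x,y) ∉ Ê₁. -/
/-!
The map sends `Ê₁` into the strip `x ≤ û₂ := (4/e²) exp ŵ₁ + k`, because `x² e^{-x} ≤ 4/e²`
for `x ≥ 0`; and `û₂ < û₁` since `ŵ₁ < v̂`. With `c = (1 - a) ŵ₁ + b û₁`, the gap
`g := ŵ₁ - y` evolves as `g' = a g - b (û₁ - x)`, so along an orbit that stays in `Ê₁` it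
drops by at least `b (û₁ - û₂) > 0` at every step after the first, while staying positive.
-/

open Real

theorem sq_le_four_mul_exp_sub_two {x : ℝ} (hx : 0 ≤ x) : x ^ 2 ≤ 4 * exp (x - 2) := by
  have h : x / 2 ≤ exp (x / 2 - 1) := by linarith [add_one_le_exp (x / 2 - 1)]
  calc x ^ 2 = 4 * (x / 2) ^ 2 := by ring
    _ ≤ 4 * exp (x / 2 - 1) ^ 2 := by gcongr
    _ = 4 * exp (x - 2) := by rw [← exp_nat_mul]; ring_nf

theorem sq_mul_exp_sub_le {x y w : ℝ} (hx : 0 ≤ x) (hy : y ≤ w) :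
    x ^ 2 * exp (y - x) ≤ 4 / exp 2 * exp w :=
  calc x ^ 2 * exp (y - x) ≤ 4 * exp (x - 2) * exp (y - x) := by
        gcongr; exact sq_le_four_mul_exp_sub_two hx
    _ = 4 / exp 2 * exp y := by
        rw [mul_assoc, ← exp_add, show x - 2 + (y - x) = y - 2 by ring, exp_sub]; ring
    _ ≤ 4 / exp 2 * exp w := by gcongr

theorem exists_iterate_notMem_of_le_sub {α : Type*} {f : α → α} {s : Set α} {V : α → ℝ}
    {δ : ℝ} (hδ : 0 < δ) (hV : ∀ q ∈ s, 0 ≤ V q) (hVf : ∀ q ∈ s, V (f q) ≤ V q - δ)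
    (p : α) : ∃ n, f^[n] p ∉ s := by
  by_contra! hs
  have hdrop : ∀ n : ℕ, V (f^[n] p) ≤ V p - n * δ := by
    intro n
    induction n with
    | zero => simp
    | succ n ih =>
      rw [Function.iterate_succ_apply']
      push_cast
      linarith [hVf _ (hs n)]
  obtain ⟨n, hn⟩ := exists_nat_gt (V p / δ)
  have hnδ : V p < n * δ := (div_lt_iff₀ hδ).1 hn
  linarith [hV _ (hs n), hdrop n]

/-- `w` is the fixed point of `y ↦ a y - b x + c` at `x = u`. -/
theorem sub_affine_step_le {a b c u u' w x y : ℝ} (ha : a < 1) (hb : 0 ≤ b)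
    (hw : w = (c - b * u) / (1 - a)) (hx : x ≤ u') (hy : y ≤ w) :
    w - (a * y - b * x + c) ≤ (w - y) - b * (u - u') := by
  have hc : c = (1 - a) * w + b * u := by
    rw [hw]; field_simp [(sub_pos.2 ha).ne']; ring
  rw [hc]
  nlinarith [mul_nonneg (sub_pos.2 ha).le (sub_nonneg.2 hy), mul_le_mul_of_nonneg_left hx hb]

theorem exists_iterate_notMem_of_mapsTo {α : Type*} {f : α → α} {s t : Set α}
    (hst : Set.MapsTo f s t) (hescape : ∀ q, ∃ n, f^[n] q ∉ s ∩ t) {p : α} (hp : p ∈ s) :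
    ∃ n, n ≥ 1 ∧ f^[n] p ∉ s := by
  by_contra! hstay
  have horbit : ∀ n, f^[n] p ∈ s := by
    rintro (_ | n)
    · exact hp
    · exact hstay _ n.succ_pos
  obtain ⟨n, hn⟩ := hescape (f p)
  have hnext := horbit (n + 1)
  rw [Function.iterate_succ_apply'] at hnext
  rw [← Function.iterate_succ_apply, Function.iterate_succ_apply'] at hn
  exact hn ⟨hnext, hst (horbit n)⟩

theorem chialvo_escape_E1_general
    (a b c k : ℝ)
    (ha : a ∈ Set.Ioo (0:ℝ) 1) (hb : b ∈ Set.Ioo (0:ℝ) 1)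
    (hk : 0 < k)
    (f : ℝ × ℝ → ℝ × ℝ)
    (hf : ∀ p : ℝ × ℝ,
      f p = (p.1 ^ 2 * Real.exp (p.2 - p.1) + k, a * p.2 - b * p.1 + c))
    (v u1 w1 : ℝ)
    (hv : v = (c - b * k) / (1 - a))
    (hu1 : u1 = 4 / Real.exp 2 * Real.exp v + k)
    (hw1 : w1 = (c - b * u1) / (1 - a))
    (E1 : Set (ℝ × ℝ))
    (hE1 : E1 = {p : ℝ × ℝ | k ≤ p.1 ∧ p.1 ≤ u1 ∧ p.2 < w1}) :
    ∀ p ∈ E1, ∃ n : ℕ, n ≥ 1 ∧ f^[n] p ∉ E1 := by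
  obtain ⟨-, ha1⟩ := ha
  obtain ⟨hb0, -⟩ := hb
  have hk_lt : k < u1 := by rw [hu1]; linarith [show 0 < 4 / exp 2 * exp v by positivity]
  have hw1_lt : w1 < v := by
    have : 0 < 1 - a := by linarith
    rw [hw1, hv]; gcongr
  set u2 := 4 / exp 2 * exp w1 + k with hu2
  have hu2_lt : u2 < u1 := by rw [hu1, hu2]; gcongr
  have hmaps : Set.MapsTo f E1 {q | q.1 ≤ u2} := by
    intro q hq
    rw [hE1] at hq
    show (f q).1 ≤ u2
    rw [hf, hu2]
    linarith [sq_mul_exp_sub_le (hk.le.trans hq.1) hq.2.2.le]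
  refine fun p hp => exists_iterate_notMem_of_mapsTo hmaps
    (exists_iterate_notMem_of_le_sub (V := fun q => w1 - q.2) (mul_pos hb0 (sub_pos.2 hu2_lt))
      ?_ ?_) hp
  · rintro q ⟨hq, -⟩
    rw [hE1] at hq
    exact sub_nonneg.2 hq.2.2.le
  · rintro q ⟨hq, hqu⟩
    rw [hE1] at hq
    rw [hf]
    exact sub_affine_step_le ha1 hb0.le hw1 hqu hq.2.2.le

/-- Every trajectory starting in region `Ê₁ = {k ≤ x ≤ û₁, y < ŵ₁}` leaves `Ê₁`
after a finite number of iterations. -/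
theorem chialvo_escape_E1
    (a b c k : ℝ)
    (ha : a ∈ Set.Ioo (0:ℝ) 1) (hb : b ∈ Set.Ioo (0:ℝ) 1)
    (hc : c ∈ Set.Ioo (0:ℝ) 1) (hk : 0 < k)
    (f : ℝ × ℝ → ℝ × ℝ)
    (hf : ∀ p : ℝ × ℝ,
      f p = (p.1 ^ 2 * Real.exp (p.2 - p.1) + k, a * p.2 - b * p.1 + c))
    (v u1 w1 : ℝ)
    (hv : v = (c - b * k) / (1 - a))
    (hu1 : u1 = 4 / Real.exp 2 * Real.exp v + k)
    (hw1 : w1 = (c - b * u1) / (1 - a))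
    (E1 : Set (ℝ × ℝ))
    (hE1 : E1 = {p : ℝ × ℝ | k ≤ p.1 ∧ p.1 ≤ u1 ∧ p.2 < w1}) :
    ∀ p ∈ E1, ∃ n : ℕ, n ≥ 1 ∧ f^[n] p ∉ E1 :=
  chialvo_escape_E1_general a b c k ha hb hk f hf v u1 w1 hv hu1 hw1 E1 hE1
end

section
/- Let û₂ > k satisfy: for all x ≥ û₂, (c − b·k)/(1 − a) < x + ln((x − k)/x²). Then for every (x,y) with x ≥ û₂ and y ≤ v̂, the first coordinate strictly decreases under the Chialvo map: x̄ < x, where (x̄, ȳ) = f(x,y). -/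
theorem sq_mul_exp_add_lt_of_lt_log {x y k : ℝ} (hx : x ≠ 0) (hkx : k < x)
    (h : y - x < Real.log ((x - k) / x ^ 2)) : x ^ 2 * Real.exp (y - x) + k < x := by
  have hx2 : 0 < x ^ 2 := by positivity
  have hexp : Real.exp (y - x) < (x - k) / x ^ 2 :=
    (Real.lt_log_iff_exp_lt (div_pos (sub_pos.mpr hkx) hx2)).mp h
  rw [lt_div_iff₀ hx2] at hexp
  linarith

theorem chialvo_C2_leftward_general
    (a b c k : ℝ)
    (hk : 0 < k)
    (f : ℝ × ℝ → ℝ × ℝ)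
    (hf : ∀ p : ℝ × ℝ,
      f p = (p.1 ^ 2 * Real.exp (p.2 - p.1) + k, a * p.2 - b * p.1 + c))
    (v : ℝ) (hv : v = (c - b * k) / (1 - a))
    (u2 : ℝ) (hu2k : u2 > k)
    (hu2 : ∀ x ≥ u2, (c - b * k) / (1 - a) < x + Real.log ((x - k) / x ^ 2)) :
    ∀ p : ℝ × ℝ, p.1 ≥ u2 → p.2 ≤ v → (f p).1 < p.1 := by
  intro p hx hy
  have hkx : k < p.1 := hu2k.trans_le hx
  have hlog : p.2 - p.1 < Real.log ((p.1 - k) / p.1 ^ 2) := by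
    have := hu2 p.1 hx
    subst hv
    linarith
  rw [hf]
  exact sq_mul_exp_add_lt_of_lt_log (hk.trans hkx).ne' hkx hlog

/-- Moving leftward in the closure of region `Ĉ₂`: if `û₂ > k` satisfies the
defining inequality, then for `x ≥ û₂` and `y ≤ v̂` the first coordinate strictly
decreases under the Chialvo map. -/
theorem chialvo_C2_leftward
    (a b c k : ℝ)
    (ha : a ∈ Set.Ioo (0:ℝ) 1) (hb : b ∈ Set.Ioo (0:ℝ) 1)
    (hc : c ∈ Set.Ioo (0:ℝ) 1) (hk : 0 < k)
    (f : ℝ × ℝ → ℝ × ℝ)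
    (hf : ∀ p : ℝ × ℝ,
      f p = (p.1 ^ 2 * Real.exp (p.2 - p.1) + k, a * p.2 - b * p.1 + c))
    (v : ℝ) (hv : v = (c - b * k) / (1 - a))
    (u2 : ℝ) (hu2k : u2 > k)
    (hu2 : ∀ x ≥ u2, (c - b * k) / (1 - a) < x + Real.log ((x - k) / x ^ 2)) :
    ∀ p : ℝ × ℝ, p.1 ≥ u2 → p.2 ≤ v → (f p).1 < p.1 :=
  chialvo_C2_leftward_general a b c k hk f hf v hv u2 hu2k hu2
end

section
/- Let û₂ > k satisfy: for all x ≥ û₂, (c − b·k)/(1 − a) < x + ln((x − k)/x²). Then every trajectory of the Chialvo map starting in the region Ĉ₂ = {(x,y) : x > û₂, y ≤ v̂} leaves Ĉ₂ after a finite number of iterations: for every (x,y) ∈ Ĉ₂ there exists n ≥ 1 such that fⁿ(x,y) ∉ Ĉ₂. -/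
/-!
Since `v̂` is the fixed point of `y ↦ a y - b k + c`, one step from `y ≤ v̂, x > û₂` lowers
`y` to at most `v̂ - b (û₂ - k)`. With `y` that low, the hypothesis on `û₂`, read as
`x² exp (v̂ - x) < x - k`, gives `x' - k ≤ e^{-b (û₂ - k)} (x - k)`. So as long as the orbit
stays in `Ĉ₂`, `x - k` decays geometrically from the second iterate on, which contradicts
`x > û₂ > k`.
-/

open Real

theorem exists_lt_of_le_mul_of_lt_one {s : ℕ → ℝ} {r ε : ℝ} (hr₀ : 0 ≤ r) (hr₁ : r < 1)
    (hε : 0 < ε) (hs : ∀ n, s (n + 1) ≤ r * s n) : ∃ n, s n < ε := by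
  have hgeom : Filter.Tendsto (fun n ↦ r ^ n * s 0) Filter.atTop (nhds 0) := by
    simpa using (tendsto_pow_atTop_nhds_zero_of_lt_one hr₀ hr₁).mul_const (s 0)
  obtain ⟨n, hn⟩ := (hgeom.eventually (gt_mem_nhds hε)).exists
  exact ⟨n, (le_geom hr₀ n fun k _ ↦ hs k).trans_lt hn⟩

namespace Chialvo

theorem fixedPoint_eq {a b c k : ℝ} (ha : a ≠ 1) :
    a * ((c - b * k) / (1 - a)) - b * k + c = (c - b * k) / (1 - a) := by
  have : 1 - a ≠ 0 := sub_ne_zero.2 ha.symm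
  field_simp
  ring

theorem snd_step_le {a b c k u x y : ℝ} (ha₀ : 0 ≤ a) (ha₁ : a ≠ 1) (hb : 0 ≤ b)
    (hy : y ≤ (c - b * k) / (1 - a)) (hx : u ≤ x) :
    a * y - b * x + c ≤ (c - b * k) / (1 - a) - b * (u - k) := by
  have := fixedPoint_eq (b := b) (c := c) (k := k) ha₁
  nlinarith [mul_le_mul_of_nonneg_left hy ha₀, mul_le_mul_of_nonneg_left hx hb]

theorem fst_step_sub_lt {k v x y δ : ℝ} (hkx : k < x) (hx : 0 < x)
    (hv : v < x + log ((x - k) / x ^ 2)) (hy : y ≤ v - δ) :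
    x ^ 2 * exp (y - x) < exp (-δ) * (x - k) := by
  have hx2 : 0 < x ^ 2 := by positivity
  have hexp : exp (v - x) < (x - k) / x ^ 2 :=
    (lt_log_iff_exp_lt (div_pos (sub_pos.2 hkx) hx2)).1 (by linarith)
  calc x ^ 2 * exp (y - x) ≤ exp (-δ) * (x ^ 2 * exp (v - x)) := by
        rw [mul_left_comm, ← exp_add]
        gcongr
        linarith
    _ < exp (-δ) * (x - k) := by
        gcongr
        rwa [lt_div_iff₀' hx2] at hexp

end Chialvo

theorem chialvo_escape_C2_general
    (a b c k : ℝ)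
    (ha : a ∈ Set.Ioo (0:ℝ) 1) (hb : b ∈ Set.Ioo (0:ℝ) 1)
    (hk : 0 < k)
    (f : ℝ × ℝ → ℝ × ℝ)
    (hf : ∀ p : ℝ × ℝ,
      f p = (p.1 ^ 2 * Real.exp (p.2 - p.1) + k, a * p.2 - b * p.1 + c))
    (v : ℝ) (hv : v = (c - b * k) / (1 - a))
    (u2 : ℝ) (hu2k : u2 > k)
    (hu2 : ∀ x ≥ u2, (c - b * k) / (1 - a) < x + Real.log ((x - k) / x ^ 2))
    (C2 : Set (ℝ × ℝ)) (hC2 : C2 = {p : ℝ × ℝ | p.1 > u2 ∧ p.2 ≤ v}) :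
    ∀ p ∈ C2, ∃ n : ℕ, n ≥ 1 ∧ f^[n] p ∉ C2 := by
  intro p hp
  by_contra! hstay
  have hmem : ∀ n, f^[n] p ∈ C2 := fun n ↦
    n.eq_zero_or_pos.elim (fun h ↦ h ▸ hp) (hstay n)
  subst hC2 hv
  have hiter : ∀ n, f^[n + 1] p = f (f^[n] p) := fun n ↦ Function.iterate_succ_apply' f n p
  have hy : ∀ n, (f^[n + 1] p).2 ≤ (c - b * k) / (1 - a) - b * (u2 - k) := fun n ↦ by
    rw [hiter, hf]
    exact Chialvo.snd_step_le ha.1.le ha.2.ne hb.1.le (hmem n).2 (hmem n).1.le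
  have hcontract : ∀ n, (f^[n + 2] p).1 - k ≤ exp (-(b * (u2 - k))) * ((f^[n + 1] p).1 - k) := by
    intro n
    have hx := (hmem (n + 1)).1
    rw [hiter (n + 1), hf, add_sub_cancel_right]
    exact (Chialvo.fst_step_sub_lt (hu2k.trans hx) (hk.trans (hu2k.trans hx))
      (hu2 _ hx.le) (hy n)).le
  obtain ⟨n, hn⟩ := exists_lt_of_le_mul_of_lt_one (s := fun n ↦ (f^[n + 1] p).1 - k)
    (exp_pos _).le (exp_lt_one_iff.2 (by nlinarith [hb.1])) (sub_pos.2 hu2k) hcontract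
  linarith [(hmem (n + 1)).1]

/-- Every trajectory starting in region `Ĉ₂ = {x > û₂, y ≤ v̂}` leaves `Ĉ₂`
after a finite number of iterations. -/
theorem chialvo_escape_C2
    (a b c k : ℝ)
    (ha : a ∈ Set.Ioo (0:ℝ) 1) (hb : b ∈ Set.Ioo (0:ℝ) 1)
    (hc : c ∈ Set.Ioo (0:ℝ) 1) (hk : 0 < k)
    (f : ℝ × ℝ → ℝ × ℝ)
    (hf : ∀ p : ℝ × ℝ,
      f p = (p.1 ^ 2 * Real.exp (p.2 - p.1) + k, a * p.2 - b * p.1 + c))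
    (v : ℝ) (hv : v = (c - b * k) / (1 - a))
    (u2 : ℝ) (hu2k : u2 > k)
    (hu2 : ∀ x ≥ u2, (c - b * k) / (1 - a) < x + Real.log ((x - k) / x ^ 2))
    (C2 : Set (ℝ × ℝ)) (hC2 : C2 = {p : ℝ × ℝ | p.1 > u2 ∧ p.2 ≤ v}) :
    ∀ p ∈ C2, ∃ n : ℕ, n ≥ 1 ∧ f^[n] p ∉ C2 :=
  chialvo_escape_C2_general a b c k ha hb hk f hf v hv u2 hu2k hu2 C2 hC2
end

section
/- Let û₂ > k satisfy: for all x ≥ û₂, (c − b·k)/(1 − a) < x + ln((x − k)/x²), and set ŵ₂ := (c − b·û₂)/(1 − a). Then there exists a positive number s > 0 such that for every (x,y) in the region Ê₂ = {(x,y) : k ≤ x ≤ û₂, y < ŵ₂}, at least one of the following three conditions holds: ȳ − y ≥ s, or f(x,y) ∉ Ê₂, or ȳ̄ − ȳ ≥ s, where (x̄, ȳ) := f(x,y) and (x̄̄, ȳ̄) := f(x̄, ȳ). -/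
/-!
The `y`-increment of the Chialvo map at a point of `Ê₂` is at least `b (û₂ - x)`, so if two
consecutive increments are both small then `x` and `x̄` are both close to `û₂`. This is
impossible: the hypothesis on `û₂` at `x = û₂` (with `ŵ₂ < v̂`) gives `û₂² e^{ŵ₂ - û₂} + k < û₂`,
and for `x` close to `û₂` and `y < ŵ₂` this keeps `x̄ = x² e^{y - x} + k` a fixed distance
below `û₂`.
-/

open Real Filter Topology

namespace Chialvo

lemma mul_sub_lt_increment {a b c u x y : ℝ} (ha : a < 1) (hy : y < (c - b * u) / (1 - a)) :
    b * (u - x) < a * y - b * x + c - y := by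
  rw [lt_div_iff₀' (by linarith)] at hy
  linarith

lemma sq_mul_exp_sub_lt {u k w : ℝ} (hku : k < u) (hu : u ≠ 0)
    (h : w < u + log ((u - k) / u ^ 2)) : u ^ 2 * exp (w - u) < u - k := by
  have hpos : 0 < (u - k) / u ^ 2 := div_pos (by linarith) (by positivity)
  have hexp : exp (w - u) < (u - k) / u ^ 2 := by
    rw [← exp_log hpos]
    exact exp_lt_exp.mpr (by linarith)
  exact (lt_div_iff₀' (by positivity)).mp hexp

lemma sq_mul_exp_sub_le {x u y w : ℝ} (hx : 0 ≤ x) (hxu : x ≤ u) (hy : y ≤ w) :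
    x ^ 2 * exp (y - x) ≤ u ^ 2 * exp (w - u) * exp (u - x) := by
  rw [mul_assoc, ← exp_add, sub_add_sub_cancel]
  gcongr

lemma exists_pos_mul_exp_lt {A B : ℝ} (h : A < B) : ∃ η > 0, A * exp η < B := by
  have hlim : Tendsto (fun η => A * exp η) (𝓝[>] 0) (𝓝 A) := by
    have hcont : Continuous fun η => A * exp η := continuous_const.mul continuous_exp
    simpa using (hcont.tendsto 0).mono_left nhdsWithin_le_nhds
  obtain ⟨η, hη, hpos⟩ := ((hlim.eventually (gt_mem_nhds h)).and self_mem_nhdsWithin).exists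
  exact ⟨η, hpos, hη⟩

end Chialvo

open Chialvo in
theorem chialvo_regionE2_speed_general
    (a b c k : ℝ)
    (ha : a ∈ Set.Ioo (0:ℝ) 1) (hb : b ∈ Set.Ioo (0:ℝ) 1)
    (hk : 0 < k)
    (f : ℝ × ℝ → ℝ × ℝ)
    (hf : ∀ p : ℝ × ℝ,
      f p = (p.1 ^ 2 * Real.exp (p.2 - p.1) + k, a * p.2 - b * p.1 + c))
    (u2 : ℝ) (hu2k : u2 > k)
    (hu2 : ∀ x ≥ u2, (c - b * k) / (1 - a) < x + Real.log ((x - k) / x ^ 2))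
    (w2 : ℝ) (hw2 : w2 = (c - b * u2) / (1 - a))
    (E2 : Set (ℝ × ℝ))
    (hE2 : E2 = {p : ℝ × ℝ | k ≤ p.1 ∧ p.1 ≤ u2 ∧ p.2 < w2}) :
    ∃ s : ℝ, s > 0 ∧ ∀ p ∈ E2,
      (f p).2 - p.2 ≥ s ∨ f p ∉ E2 ∨ (f (f p)).2 - (f p).2 ≥ s := by
  have hw2v : w2 < (c - b * k) / (1 - a) := by
    rw [hw2, div_lt_div_iff_of_pos_right (by linarith [ha.2])]
    nlinarith [hb.1]
  have hcorner : u2 ^ 2 * exp (w2 - u2) < u2 - k :=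
    sq_mul_exp_sub_lt hu2k (by linarith : 0 < u2).ne' (hw2v.trans (hu2 u2 le_rfl))
  obtain ⟨η, hη, hηlt⟩ := exists_pos_mul_exp_lt hcorner
  set δ := u2 - k - u2 ^ 2 * exp (w2 - u2) * exp η
  have hδ : 0 < δ := by linarith
  subst hE2
  refine ⟨b * min η δ, mul_pos hb.1 (lt_min hη hδ), ?_⟩
  rintro ⟨x, y⟩ ⟨hkx, hxu, hy⟩
  by_contra! ⟨hinc, ⟨-, -, hy'⟩, hinc'⟩
  simp only [hf] at hinc hy' hinc'
  have hslow : ∀ {t : ℝ}, b * t < b * min η δ → t < η ∧ t < δ := fun h =>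
    lt_min_iff.mp (lt_of_mul_lt_mul_left h hb.1.le)
  have hx : u2 - x < η := (hslow ((mul_sub_lt_increment ha.2 (hw2 ▸ hy)).trans hinc)).1
  have hx' : u2 - (x ^ 2 * exp (y - x) + k) < δ :=
    (hslow ((mul_sub_lt_increment ha.2 (hw2 ▸ hy')).trans hinc')).2
  have hbelow : x ^ 2 * exp (y - x) ≤ u2 ^ 2 * exp (w2 - u2) * exp η :=
    (sq_mul_exp_sub_le (hk.le.trans hkx) hxu hy.le).trans (by gcongr)
  linarith

/-- Moving upward in region `Ê₂`: there is a uniform positive speed `s` such that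
for every point of `Ê₂`, either `ȳ - y ≥ s`, or the image leaves `Ê₂`,
or `ȳ̄ - ȳ ≥ s`. -/
theorem chialvo_regionE2_speed
    (a b c k : ℝ)
    (ha : a ∈ Set.Ioo (0:ℝ) 1) (hb : b ∈ Set.Ioo (0:ℝ) 1)
    (hc : c ∈ Set.Ioo (0:ℝ) 1) (hk : 0 < k)
    (f : ℝ × ℝ → ℝ × ℝ)
    (hf : ∀ p : ℝ × ℝ,
      f p = (p.1 ^ 2 * Real.exp (p.2 - p.1) + k, a * p.2 - b * p.1 + c))
    (v : ℝ) (hv : v = (c - b * k) / (1 - a))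
    (u2 : ℝ) (hu2k : u2 > k)
    (hu2 : ∀ x ≥ u2, (c - b * k) / (1 - a) < x + Real.log ((x - k) / x ^ 2))
    (w2 : ℝ) (hw2 : w2 = (c - b * u2) / (1 - a))
    (E2 : Set (ℝ × ℝ))
    (hE2 : E2 = {p : ℝ × ℝ | k ≤ p.1 ∧ p.1 ≤ u2 ∧ p.2 < w2}) :
    ∃ s : ℝ, s > 0 ∧ ∀ p ∈ E2,
      (f p).2 - p.2 ≥ s ∨ f p ∉ E2 ∨ (f (f p)).2 - (f p).2 ≥ s :=
  chialvo_regionE2_speed_general a b c k ha hb hk f hf u2 hu2k hu2 w2 hw2 E2 hE2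
end

section
/- Assume additionally that a + b ≥ 1. Let û₂ > k satisfy: for all x ≥ û₂, (c − b·k)/(1 − a) < x + ln((x − k)/x²), and set ŵ₂ := (c − b·û₂)/(1 − a). If (x,y) ∈ Ê₂ = {(x,y) : k ≤ x ≤ û₂, y < ŵ₂}, then f(x,y) ∈ D̂₂ = {(x,y) : k ≤ x ≤ û₂, y ≤ v̂}; in other words, there is no direct passage from Ê₂ to the region Ĉ₂ = {(x,y) : x > û₂, y ≤ v̂} in one step. -/
/-!
`v̂` is the fixed point of `y ↦ a y - b k + c`, and `ŵ₂ ≤ v̂`, so the second coordinate of the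
image stays below `v̂`. For the first coordinate, `a + b ≥ 1` gives
`v̂ - ŵ₂ = b (û₂ - k) / (1 - a) ≥ û₂ - k`; combined with the defining inequality of `û₂` at `û₂`
itself this bounds `y - x` by `ln ((û₂ - k) / û₂²)`, hence `x² e^(y - x) ≤ û₂ - k`.
-/

open Real

lemma div_one_sub_le_div_one_sub_of_le {a b c k u : ℝ} (ha : a < 1) (hb : 0 ≤ b) (hku : k ≤ u) :
    (c - b * u) / (1 - a) ≤ (c - b * k) / (1 - a) :=
  div_le_div_of_nonneg_right (by nlinarith) (by linarith)

lemma sub_le_div_one_sub_sub_div_one_sub {a b c k u : ℝ} (ha : a < 1) (hab : 1 ≤ a + b)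
    (hku : k ≤ u) :
    u - k ≤ (c - b * k) / (1 - a) - (c - b * u) / (1 - a) := by
  have h1a : 0 < 1 - a := by linarith
  rw [← sub_div, le_div_iff₀ h1a]
  nlinarith

lemma affine_le_fixedPoint {a b c k x y : ℝ} (ha₀ : 0 ≤ a) (ha₁ : a < 1) (hb : 0 ≤ b)
    (hkx : k ≤ x) (hy : y ≤ (c - b * k) / (1 - a)) :
    a * y - b * x + c ≤ (c - b * k) / (1 - a) := by
  set v := (c - b * k) / (1 - a)
  have hv : a * v - b * k + c = v := by
    simp only [v]
    field_simp [(by linarith : (1 - a) ≠ 0)]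
    ring
  nlinarith [mul_le_mul_of_nonneg_left hy ha₀, mul_le_mul_of_nonneg_left hkx hb]

lemma sq_mul_exp_lt_of_lt_log {x u s t : ℝ} (hx : 0 < x) (hxu : x ≤ u) (hs : 0 < s)
    (ht : t < log (s / u ^ 2)) :
    x ^ 2 * exp t < s := by
  have hu : 0 < u := hx.trans_le hxu
  have hexp : exp t < s / u ^ 2 := (lt_log_iff_exp_lt (by positivity)).mp ht
  calc x ^ 2 * exp t < x ^ 2 * (s / u ^ 2) := by gcongr
    _ ≤ u ^ 2 * (s / u ^ 2) := by gcongr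
    _ = s := by field_simp

theorem chialvo_no_E2_to_C2_general
    (a b c k : ℝ)
    (ha : a ∈ Set.Ioo (0:ℝ) 1) (hb : b ∈ Set.Ioo (0:ℝ) 1)
    (hk : 0 < k)
    (hab : a + b ≥ 1)
    (f : ℝ × ℝ → ℝ × ℝ)
    (hf : ∀ p : ℝ × ℝ,
      f p = (p.1 ^ 2 * Real.exp (p.2 - p.1) + k, a * p.2 - b * p.1 + c))
    (v : ℝ) (hv : v = (c - b * k) / (1 - a))
    (u2 : ℝ) (hu2k : u2 > k)
    (hu2 : ∀ x ≥ u2, (c - b * k) / (1 - a) < x + Real.log ((x - k) / x ^ 2))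
    (w2 : ℝ) (hw2 : w2 = (c - b * u2) / (1 - a))
    (D2 E2 : Set (ℝ × ℝ))
    (hD2 : D2 = {p : ℝ × ℝ | k ≤ p.1 ∧ p.1 ≤ u2 ∧ p.2 ≤ v})
    (hE2 : E2 = {p : ℝ × ℝ | k ≤ p.1 ∧ p.1 ≤ u2 ∧ p.2 < w2}) :
    ∀ p ∈ E2, f p ∈ D2 := by
  rintro ⟨x, y⟩ hp
  subst hD2 hE2 hv hw2
  obtain ⟨hkx, hxu, hyw⟩ := hp
  have hwv := div_one_sub_le_div_one_sub_of_le (c := c) ha.2 hb.1.le hu2k.le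
  have hgap := sub_le_div_one_sub_sub_div_one_sub (c := c) ha.2 hab hu2k.le
  have hyx : y - x < log ((u2 - k) / u2 ^ 2) := by linarith [hu2 u2 le_rfl]
  have hfst := sq_mul_exp_lt_of_lt_log (hk.trans_le hkx) hxu (sub_pos.mpr hu2k) hyx
  rw [hf]
  refine ⟨le_add_of_nonneg_left (by positivity), by linarith, ?_⟩
  exact affine_le_fixedPoint ha.1.le ha.2 hb.1.le hkx (hyw.le.trans hwv)

/-- No direct return from `Ê₂` to `Ĉ₂`: assuming `a + b ≥ 1`, if `(x,y) ∈ Ê₂`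
then `f(x,y) ∈ D̂₂`. -/
theorem chialvo_no_E2_to_C2
    (a b c k : ℝ)
    (ha : a ∈ Set.Ioo (0:ℝ) 1) (hb : b ∈ Set.Ioo (0:ℝ) 1)
    (hc : c ∈ Set.Ioo (0:ℝ) 1) (hk : 0 < k)
    (hab : a + b ≥ 1)
    (f : ℝ × ℝ → ℝ × ℝ)
    (hf : ∀ p : ℝ × ℝ,
      f p = (p.1 ^ 2 * Real.exp (p.2 - p.1) + k, a * p.2 - b * p.1 + c))
    (v : ℝ) (hv : v = (c - b * k) / (1 - a))
    (u2 : ℝ) (hu2k : u2 > k)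
    (hu2 : ∀ x ≥ u2, (c - b * k) / (1 - a) < x + Real.log ((x - k) / x ^ 2))
    (w2 : ℝ) (hw2 : w2 = (c - b * u2) / (1 - a))
    (D2 E2 : Set (ℝ × ℝ))
    (hD2 : D2 = {p : ℝ × ℝ | k ≤ p.1 ∧ p.1 ≤ u2 ∧ p.2 ≤ v})
    (hE2 : E2 = {p : ℝ × ℝ | k ≤ p.1 ∧ p.1 ≤ u2 ∧ p.2 < w2}) :
    ∀ p ∈ E2, f p ∈ D2 :=
  chialvo_no_E2_to_C2_general a b c k ha hb hk hab f hf v hv u2 hu2k hu2 w2 hw2 D2 E2 hD2 hE2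
end

section
/- Assume additionally that a + b ≥ 1. Let û₂ > k satisfy: for all x ≥ û₂, (c − b·k)/(1 − a) < x + ln((x − k)/x²), and set ŵ₂ := (c − b·û₂)/(1 − a). Then the set D̂₂⁺ = [k, û₂] × [ŵ₂, v̂] is a weakly absorbing set for the Chialvo map f: for every point (x,y) ∈ ℝ² there exists some n ≥ 0 such that fⁿ(x,y) ∈ D̂₂⁺. -/
/-!
Every orbit goes through three phases, each driven by a potential that drops by a fixed amount
per step as long as the orbit stays outside a target set, so that the target is reached.
Writing `p = (x, y)`, one has `y' - v = a (y - v) - b (x - k)` and `x' ≥ k` after one step.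

1. While `y > v`, the potential `(y - v) + (y' - v)` drops by `b ((x - k) + (x' - k))`, which stays
   away from zero since `x' - k ≥ k² e^{v - x}`.
2. Once `y ≤ v` (a forward-invariant condition), the choice of `û₂` gives `x' ≤ x² e^{v - x} + k < x`
   for `x ≥ û₂`, so `x` drops by at least the minimum of `x - x² e^{v - x} - k` on a compact interval.
3. In `[k, û₂] × (-∞, v]` with `y < ŵ₂`, the bound `ŵ₂ - k ≤ v - û₂`, a consequence of `a + b ≥ 1`,
   gives `x' ≤ û₂² e^{v - û₂} + k < û₂`, and then `b x - y` drops by `b (û₂ - x')`.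
-/

open Real Set Function

/-- The hypotheses only concern points whose image also lies outside `S`, which allows potentials
that look one step ahead. -/
theorem exists_iterate_mem_inter_of_potential {α : Type*} (g : α → α) {Q S : Set α} (V : α → ℝ)
    {ε B : ℝ} (hε : 0 < ε) (hmaps : ∀ p ∈ Q, p ∉ S → g p ∈ Q)
    (hbdd : ∀ p ∈ Q, p ∉ S → g p ∉ S → B ≤ V p)
    (hdrop : ∀ p ∈ Q, p ∉ S → g p ∉ S → V (g p) ≤ V p - ε) {p : α} (hp : p ∈ Q) :
    ∃ n, g^[n] p ∈ Q ∩ S := by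
  by_contra! hout
  have hQ : ∀ n, g^[n] p ∈ Q := by
    intro n
    induction n with
    | zero => exact hp
    | succ n ih => rw [iterate_succ_apply']; exact hmaps _ ih fun h => hout n ⟨ih, h⟩
  have hS : ∀ n, g^[n] p ∉ S := fun n h => hout n ⟨hQ n, h⟩
  have hS' : ∀ n, g (g^[n] p) ∉ S := fun n => by simpa [iterate_succ_apply'] using hS (n + 1)
  have hV : ∀ n : ℕ, V (g^[n] p) ≤ V p - n * ε := by
    intro n
    induction n with
    | zero => simp
    | succ n ih =>
      rw [iterate_succ_apply']
      have := hdrop _ (hQ n) (hS n) (hS' n)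
      push_cast
      linarith
  obtain ⟨n, hn⟩ := exists_nat_gt ((V p - B) / ε)
  rw [div_lt_iff₀ hε] at hn
  linarith [hV n, hbdd _ (hQ n) (hS n) (hS' n)]

theorem sq_mul_exp_sub_add_lt_of_lt_add_log {k v x : ℝ} (hk : 0 ≤ k) (hkx : k < x)
    (h : v < x + log ((x - k) / x ^ 2)) : x ^ 2 * exp (v - x) + k < x := by
  have hx : 0 < x ^ 2 := by nlinarith
  have hexp : exp (v - x) < (x - k) / x ^ 2 := by
    rw [← exp_log (div_pos (sub_pos.2 hkx) hx)]
    exact exp_lt_exp.2 (by linarith)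
  rw [lt_div_iff₀ hx] at hexp
  linarith

noncomputable def chialvo (a b c k : ℝ) (p : ℝ × ℝ) : ℝ × ℝ :=
  (p.1 ^ 2 * exp (p.2 - p.1) + k, a * p.2 - b * p.1 + c)

namespace chialvo

variable {a b c k : ℝ}

theorem le_fst (p : ℝ × ℝ) : k ≤ (chialvo a b c k p).1 :=
  le_add_of_nonneg_left (by positivity)

theorem fst_le_of_snd_le {p : ℝ × ℝ} {y : ℝ} (hy : p.2 ≤ y) :
    (chialvo a b c k p).1 ≤ p.1 ^ 2 * exp (y - p.1) + k := by
  simp only [chialvo]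
  gcongr

theorem snd_sub_eq {u w : ℝ} (hw : (1 - a) * w = c - b * u) (p : ℝ × ℝ) :
    (chialvo a b c k p).2 - w = a * (p.2 - w) - b * (p.1 - u) := by
  simp only [chialvo]
  linarith

theorem snd_le_of_fst_ge {v : ℝ} (ha : 0 ≤ a) (hb : 0 ≤ b) (hv : (1 - a) * v = c - b * k)
    {p : ℝ × ℝ} (hx : k ≤ p.1) (hy : p.2 ≤ v) : (chialvo a b c k p).2 ≤ v := by
  have := snd_sub_eq (k := k) hv p
  nlinarith

theorem exists_iterate_snd_le {v : ℝ} (ha : a ≤ 1) (hb : 0 < b) (hk : 0 < k)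
    (hv : (1 - a) * v = c - b * k) {p : ℝ × ℝ} (hp : k ≤ p.1) :
    ∃ n, (chialvo a b c k)^[n] p ∈ {q | k ≤ q.1} ∩ {q | q.2 ≤ v} := by
  set f := chialvo a b c k
  set δ := min 1 (k ^ 2 * exp (v - (k + 1)))
  have hδ : 0 < δ := lt_min one_pos (by positivity)
  have hgap : ∀ x, k ≤ x → δ ≤ (x - k) + k ^ 2 * exp (v - x) := by
    intro x hx
    rcases le_total (k + 1) x with hx1 | hx1
    · have := exp_pos (v - x)
      nlinarith [min_le_left 1 (k ^ 2 * exp (v - (k + 1)))]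
    · have : exp (v - (k + 1)) ≤ exp (v - x) := exp_le_exp.2 (by linarith)
      nlinarith [min_le_right 1 (k ^ 2 * exp (v - (k + 1)))]
  refine exists_iterate_mem_inter_of_potential f (fun q => (q.2 - v) + ((f q).2 - v))
    (mul_pos hb hδ) (fun q _ _ => le_fst q) (B := 0) ?_ ?_ hp
  · intro q _ hq hfq
    simp only [mem_ofPred_eq, not_le] at hq hfq
    linarith
  · intro q (hqk : k ≤ q.1) hq hfq
    simp only [mem_ofPred_eq, not_le] at hq hfq
    have e₁ := snd_sub_eq (k := k) hv q
    have e₂ := snd_sub_eq (k := k) hv (f q)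
    have hfst : k ^ 2 * exp (v - q.1) ≤ (f q).1 - k := by
      simp only [f, chialvo, add_sub_cancel_right]
      gcongr
    have hsum : b * ((q.1 - k) + ((f q).1 - k)) ≤ (q.2 - v) - ((f (f q)).2 - v) := by nlinarith
    have hδsum : δ ≤ (q.1 - k) + ((f q).1 - k) := (hgap q.1 hqk).trans (by linarith)
    nlinarith

theorem exists_iterate_fst_le {u v : ℝ} (ha : 0 ≤ a) (hb : 0 ≤ b) (hv : (1 - a) * v = c - b * k)
    (hu : ∀ x ≥ u, x ^ 2 * exp (v - x) + k < x) {p : ℝ × ℝ} (hpk : k ≤ p.1) (hpv : p.2 ≤ v) :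
    ∃ n, (chialvo a b c k)^[n] p ∈
      {q | k ≤ q.1 ∧ q.1 ≤ p.1 ∧ q.2 ≤ v} ∩ {q | q.1 ≤ u} := by
  obtain ⟨δ, hδ, hgap⟩ := (isCompact_Icc (a := u) (b := p.1)).exists_forall_le'
    (f := fun x => x - (x ^ 2 * exp (v - x) + k)) (by fun_prop)
    (fun x hx => sub_pos.2 (hu x hx.1))
  refine exists_iterate_mem_inter_of_potential _ Prod.fst hδ ?_ (B := u) ?_ ?_ ⟨hpk, le_rfl, hpv⟩
  · rintro q ⟨hqk, hqp, hqv⟩ hq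
    simp only [mem_ofPred_eq, not_le] at hq
    exact ⟨le_fst q, (fst_le_of_snd_le hqv).trans (hu _ hq.le).le |>.trans hqp,
      snd_le_of_fst_ge ha hb hv hqk hqv⟩
  · intro q _ hq _
    simp only [mem_ofPred_eq, not_le] at hq
    exact hq.le
  · rintro q ⟨-, hqp, hqv⟩ hq -
    simp only [mem_ofPred_eq, not_le] at hq
    have := hgap q.1 ⟨hq.le, hqp⟩
    have := fst_le_of_snd_le (a := a) (b := b) (c := c) (k := k) hqv
    linarith

theorem exists_iterate_snd_ge {u v w : ℝ} (ha : a ∈ Ico 0 1) (hb : 0 < b) (hk : 0 ≤ k)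
    (hab : 1 ≤ a + b)
    (hv : (1 - a) * v = c - b * k) (hw : (1 - a) * w = c - b * u)
    (hu : u ^ 2 * exp (v - u) + k < u) {p : ℝ × ℝ}
    (hp : p ∈ {q : ℝ × ℝ | k ≤ q.1 ∧ q.1 ≤ u ∧ q.2 ≤ v}) :
    ∃ n, (chialvo a b c k)^[n] p ∈
      {q | k ≤ q.1 ∧ q.1 ≤ u ∧ q.2 ≤ v} ∩ {q | w ≤ q.2} := by
  obtain ⟨ha0, ha1⟩ := ha
  have hwv : w - k ≤ v - u := by nlinarith [hp.1.trans hp.2.1]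
  have hfst : ∀ q : ℝ × ℝ, k ≤ q.1 → q.1 ≤ u → q.2 < w →
      (chialvo a b c k q).1 ≤ u ^ 2 * exp (v - u) + k := by
    intro q hqk hqu hqw
    refine (fst_le_of_snd_le hqw.le).trans ?_
    gcongr ?_ ^ 2 * exp ?_ + k
    · linarith
    · linarith
  refine exists_iterate_mem_inter_of_potential _ (fun q => b * q.1 - q.2)
    (mul_pos hb (sub_pos.2 hu)) ?_ (B := b * k - w) ?_ ?_ hp
  · rintro q ⟨hqk, hqu, hqv⟩ hq
    simp only [mem_ofPred_eq, not_le] at hq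
    exact ⟨le_fst q, (hfst q hqk hqu hq).trans hu.le, snd_le_of_fst_ge ha0 hb.le hv hqk hqv⟩
  · rintro q ⟨hqk, -, -⟩ hq -
    simp only [mem_ofPred_eq, not_le] at hq
    nlinarith
  · rintro q ⟨hqk, hqu, -⟩ hq -
    simp only [mem_ofPred_eq, not_le] at hq
    have := hfst q hqk hqu hq
    have := snd_sub_eq (k := k) hw q
    nlinarith

end chialvo

theorem chialvo_D2plus_weakly_absorbing_general
    (a b c k : ℝ)
    (ha : a ∈ Set.Ioo (0:ℝ) 1) (hb : b ∈ Set.Ioo (0:ℝ) 1)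
    (hk : 0 < k)
    (hab : a + b ≥ 1)
    (f : ℝ × ℝ → ℝ × ℝ)
    (hf : ∀ p : ℝ × ℝ,
      f p = (p.1 ^ 2 * Real.exp (p.2 - p.1) + k, a * p.2 - b * p.1 + c))
    (v : ℝ) (hv : v = (c - b * k) / (1 - a))
    (u2 : ℝ) (hu2k : u2 > k)
    (hu2 : ∀ x ≥ u2, (c - b * k) / (1 - a) < x + Real.log ((x - k) / x ^ 2))
    (w2 : ℝ) (hw2 : w2 = (c - b * u2) / (1 - a)) :
    ∀ p : ℝ × ℝ, ∃ n : ℕ, f^[n] p ∈ Set.Icc k u2 ×ˢ Set.Icc w2 v := by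
  obtain rfl : f = chialvo a b c k := funext hf
  have h1a : 1 - a ≠ 0 := by linarith [ha.2]
  have hv' : (1 - a) * v = c - b * k := by rw [hv]; field_simp
  have hw2' : (1 - a) * w2 = c - b * u2 := by rw [hw2]; field_simp
  have hu : ∀ x ≥ u2, x ^ 2 * exp (v - x) + k < x := fun x hx =>
    sq_mul_exp_sub_add_lt_of_lt_add_log hk.le (hu2k.trans_le hx) (hv ▸ hu2 x hx)
  intro p
  obtain ⟨n₁, hk₁, hv₁⟩ :=
    chialvo.exists_iterate_snd_le ha.2.le hb.1 hk hv' (chialvo.le_fst (a := a) (b := b) (c := c) p)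
  obtain ⟨n₂, ⟨hk₂, -, hv₂⟩, hu₂⟩ := chialvo.exists_iterate_fst_le ha.1.le hb.1.le hv' hu hk₁ hv₁
  obtain ⟨n₃, ⟨hk₃, hu₃, hv₃⟩, hw₃⟩ := chialvo.exists_iterate_snd_ge ⟨ha.1.le, ha.2⟩ hb.1 hk.le
    hab hv' hw2' (hu u2 le_rfl) ⟨hk₂, hu₂, hv₂⟩
  refine ⟨n₃ + n₂ + n₁ + 1, ?_⟩
  simp only [iterate_add_apply, iterate_one] at hk₃ hu₃ hv₃ hw₃ ⊢
  exact ⟨⟨hk₃, hu₃⟩, hw₃, hv₃⟩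

/-- Assuming `a + b ≥ 1`, the set `D̂₂⁺ = [k, û₂] × [ŵ₂, v̂]` is a weakly
absorbing set for the Chialvo map: every forward trajectory hits it. -/
theorem chialvo_D2plus_weakly_absorbing
    (a b c k : ℝ)
    (ha : a ∈ Set.Ioo (0:ℝ) 1) (hb : b ∈ Set.Ioo (0:ℝ) 1)
    (hc : c ∈ Set.Ioo (0:ℝ) 1) (hk : 0 < k)
    (hab : a + b ≥ 1)
    (f : ℝ × ℝ → ℝ × ℝ)
    (hf : ∀ p : ℝ × ℝ,
      f p = (p.1 ^ 2 * Real.exp (p.2 - p.1) + k, a * p.2 - b * p.1 + c))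
    (v : ℝ) (hv : v = (c - b * k) / (1 - a))
    (u2 : ℝ) (hu2k : u2 > k)
    (hu2 : ∀ x ≥ u2, (c - b * k) / (1 - a) < x + Real.log ((x - k) / x ^ 2))
    (w2 : ℝ) (hw2 : w2 = (c - b * u2) / (1 - a)) :
    ∀ p : ℝ × ℝ, ∃ n : ℕ, f^[n] p ∈ Set.Icc k u2 ×ˢ Set.Icc w2 v :=
  chialvo_D2plus_weakly_absorbing_general a b c k ha hb hk hab f hf v hv u2 hu2k hu2 w2 hw2
end
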